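/- arXiv:2603.00379 — 13 statements merged into one kernel-verified Lean document; each statement's English description precedes it below -/
import Mathlib

section
/- If a barrier certificate exists for a discrete-time dynamical system, then the system is safe: no state sequence starting in the initial set ever reaches the unsafe set. -/
/-- Barrier certificates imply safety. -/
theorem bc_implies_safety {X : Type*} (X0 Xu : Set X) (f : X → Set X)
    (B : X → ℝ) (lam : ℝ) (hlam : 0 ≤ lam)
    (h1 : ∀ x0 ∈ X0, B x0 ≤ 0)
    (h2 : ∀ xu ∈ Xu, B xu > 0)
    (h3 : ∀ x, ∀ x' ∈ f x, B x' ≤ lam * B x) :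
    ∀ s : ℕ → X, s 0 ∈ X0 → (∀ i, s (i + 1) ∈ f (s i)) →
      ∀ i, 1 ≤ i → s i ∉ Xu := by
  intro s hs0 hstep i _ hu
  have key : ∀ j, B (s j) ≤ 0 := by
    intro j
    induction j with
    | zero => exact h1 _ hs0
    | succ n ih =>
      calc B (s (n + 1)) ≤ lam * B (s n) := h3 _ _ (hstep n)
        _ ≤ 0 := mul_nonpos_of_nonneg_of_nonpos hlam ih
  exact absurd (h2 _ hu) (not_lt.2 (key i))
end

section
/- If a vector barrier certificate exists for a discrete-time dynamical system, then the system is safe: no state sequence starting in the initial set ever reaches the unsafe set. -/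
/-- Vector barrier certificates imply safety. -/
theorem vbc_implies_safety {X : Type*} (X0 Xu : Set X) (f : X → Set X)
    (k : ℕ) (B : Fin k → X → ℝ) (A : Fin k → Fin k → ℝ)
    (hA : ∀ i j, 0 ≤ A i j)
    (h1 : ∀ i, ∀ x0 ∈ X0, B i x0 ≤ 0)
    (h2 : ∀ xu ∈ Xu, ∃ i, B i xu > 0)
    (h3 : ∀ i, ∀ x, ∀ x' ∈ f x, B i x' ≤ ∑ j, A i j * B j x) :
    ∀ s : ℕ → X, s 0 ∈ X0 → (∀ i, s (i + 1) ∈ f (s i)) →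
      ∀ i, 1 ≤ i → s i ∉ Xu := by
  intro s hs0 hstep i _ hiu
  have key : ∀ n, ∀ j, B j (s n) ≤ 0 := by
    intro n
    induction n with
    | zero => exact fun j => h1 j _ hs0
    | succ n ih =>
      intro j
      calc B j (s (n+1)) ≤ ∑ l, A j l * B l (s n) := h3 j (s n) _ (hstep n)
        _ ≤ 0 := Finset.sum_nonpos fun l _ =>
            mul_nonpos_of_nonneg_of_nonpos (hA j l) (ih l)
  obtain ⟨j, hj⟩ := h2 _ hiu
  exact absurd (key i j) (not_le.mpr hj)
end

section
/- Given a vector barrier certificate (B, A) for a discrete-time system, the componentwise-nonpositive set {x | ∀ i, B i x ≤ 0} is an inductive invariant: it contains the initial set and is closed under the transition relation, and it is disjoint from the unsafe set. -/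
/-- The componentwise-nonpositive set of a vector barrier certificate is an
inductive invariant disjoint from the unsafe set. -/
theorem vbc_inductive_invariant {X : Type*} (X0 Xu : Set X) (f : X → Set X)
    (k : ℕ) (B : Fin k → X → ℝ) (A : Fin k → Fin k → ℝ)
    (hA : ∀ i j, 0 ≤ A i j)
    (h1 : ∀ i, ∀ x0 ∈ X0, B i x0 ≤ 0)
    (h2 : ∀ xu ∈ Xu, ∃ i, B i xu > 0)
    (h3 : ∀ i, ∀ x, ∀ x' ∈ f x, B i x' ≤ ∑ j, A i j * B j x) :
    X0 ⊆ {x | ∀ i, B i x ≤ 0} ∧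
    (∀ x ∈ {x | ∀ i, B i x ≤ 0}, f x ⊆ {x | ∀ i, B i x ≤ 0}) ∧
    {x | ∀ i, B i x ≤ 0} ∩ Xu = ∅ := by
  refine ⟨fun x hx i => h1 i x hx, fun x hx x' hx' i => ?_, ?_⟩
  · refine (h3 i x x' hx').trans ?_
    exact Finset.sum_nonpos fun j _ => mul_nonpos_of_nonneg_of_nonpos (hA i j) (hx j)
  · ext x
    simp only [Set.mem_inter_iff, Set.mem_setOf_eq, Set.mem_empty_iff_false, iff_false]
    rintro ⟨hb, hu⟩
    obtain ⟨i, hi⟩ := h2 x hu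
    exact absurd (hb i) (not_le.2 hi)
end

section
/- If a closure certificate for safety exists for a discrete-time dynamical system, then the system is safe. -/
/-- Closure certificates imply safety. -/
theorem cc_implies_safety {X : Type*} (X0 Xu : Set X) (f : X → Set X)
    (T : X → X → ℝ) (η lam : ℝ) (hη : 0 < η) (hlam : 0 ≤ lam)
    (h1 : ∀ x, ∀ x' ∈ f x, T x x' ≥ 0)
    (h2 : ∀ x y, ∀ x' ∈ f x, T x y ≥ lam * T x' y)
    (h3 : ∀ x0 ∈ X0, ∀ xu ∈ Xu, T x0 xu ≤ -η) :
    ∀ s : ℕ → X, s 0 ∈ X0 → (∀ i, s (i + 1) ∈ f (s i)) →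
      ∀ i, 1 ≤ i → s i ∉ Xu := by
  intro s hs0 hstep i hi hu
  obtain ⟨m, rfl⟩ : ∃ m, i = m + 1 := ⟨i - 1, (Nat.succ_pred_eq_of_pos hi).symm⟩
  have key : ∀ k, T (s (m - k)) (s (m + 1)) ≥ 0 := by
    intro k
    induction k with
    | zero => exact h1 _ _ (hstep m)
    | succ k ih =>
      by_cases h : k < m
      · have : m - (k + 1) + 1 = m - k := by omega
        have hmem : s (m - k) ∈ f (s (m - (k + 1))) := by
          rw [← this]; exact hstep _
        calc T (s (m - (k+1))) (s (m+1)) ≥ lam * T (s (m - k)) (s (m+1)) :=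
              h2 _ _ _ hmem
          _ ≥ 0 := mul_nonneg hlam ih
      · have : m - (k + 1) = m - k := by omega
        rw [this]; exact ih
  have h0 : T (s 0) (s (m + 1)) ≥ 0 := by
    have := key m; simpa using this
  have := h3 _ hs0 _ hu
  linarith
end

section
/- Given a closure certificate for safety, for every state sequence s and any indices i < j, the certificate is nonnegative on the pair (s i, s j); i.e., T (s i) (s j) ≥ 0. -/
/-- A closure certificate is nonnegative on reachable pairs. -/
theorem cc_nonneg_on_reachable_pairs {X : Type*} (f : X → Set X)
    (T : X → X → ℝ) (lam : ℝ) (hlam : 0 ≤ lam)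
    (h1 : ∀ x, ∀ x' ∈ f x, T x x' ≥ 0)
    (h2 : ∀ x y, ∀ x' ∈ f x, T x y ≥ lam * T x' y) :
    ∀ s : ℕ → X, (∀ i, s (i + 1) ∈ f (s i)) →
      ∀ i j, i < j → T (s i) (s j) ≥ 0 := by
  intro s hs i j hij
  have key : ∀ k i, T (s i) (s (i + 1 + k)) ≥ 0 := by
    intro k
    induction k with
    | zero => intro i; exact h1 _ _ (hs i)
    | succ k ih =>
      intro i
      have h := h2 (s i) (s (i + 1 + (k + 1))) (s (i + 1)) (hs i)
      have : s (i + 1 + (k + 1)) = s ((i + 1) + 1 + k) := by ring_nf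
      rw [this] at h ⊢
      exact le_trans (mul_nonneg hlam (ih (i + 1))) h
  obtain ⟨k, rfl⟩ := Nat.exists_eq_add_of_lt hij
  simpa [Nat.add_right_comm] using key k i
end

section
/- If a vector closure certificate for safety exists for a discrete-time dynamical system, then the system is safe. -/
/-- Vector closure certificates imply safety. -/
theorem vcc_implies_safety {X : Type*} (X0 Xu : Set X) (f : X → Set X)
    (k : ℕ) (T : Fin k → X → X → ℝ) (η : ℝ) (hη : 0 < η)
    (A : Fin k → Fin k → ℝ) (hA : ∀ i j, 0 ≤ A i j)
    (h1 : ∀ i, ∀ x, ∀ x' ∈ f x, T i x x' ≥ 0)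
    (h2 : ∀ i, ∀ x y, ∀ x' ∈ f x, T i x y ≥ ∑ j, A i j * T j x' y)
    (h3 : ∀ x0 ∈ X0, ∀ xu ∈ Xu, ∃ i, T i x0 xu ≤ -η) :
    ∀ s : ℕ → X, s 0 ∈ X0 → (∀ i, s (i + 1) ∈ f (s i)) →
      ∀ n, 1 ≤ n → s n ∉ Xu := by
  intro s hs0 hf n hn hu
  have key : ∀ j i, 0 ≤ T i (s (n - 1 - j)) (s n) := by
    intro j
    induction j with
    | zero =>
      intro i
      have hmem : s n ∈ f (s (n - 1)) := by
        have h : n - 1 + 1 = n := by omega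
        rw [← h]; exact hf _
      simpa using h1 i (s (n - 1)) (s n) hmem
    | succ j ih =>
      intro i
      rcases Nat.eq_zero_or_pos (n - 1 - j) with h0 | hpos
      · have h : n - 1 - (j + 1) = n - 1 - j := by omega
        rw [h]; exact ih i
      · have hst : s (n - 1 - j) ∈ f (s (n - 1 - (j + 1))) := by
          have h : n - 1 - (j + 1) + 1 = n - 1 - j := by omega
          rw [← h]; exact hf _
        calc 0 ≤ ∑ j', A i j' * T j' (s (n - 1 - j)) (s n) :=
              Finset.sum_nonneg fun j' _ => mul_nonneg (hA i j') (ih j')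
          _ ≤ T i (s (n - 1 - (j + 1))) (s n) := h2 i _ _ _ hst
  obtain ⟨i, hi⟩ := h3 (s 0) hs0 (s n) hu
  have h0 := key (n - 1) i
  have : n - 1 - (n - 1) = 0 := by omega
  rw [this] at h0
  linarith
end

section
/- Given a vector closure certificate (conditions (1) and (2) only), every component is nonnegative on reachable pairs: for any state sequence s and indices i < j, T d (s i) (s j) ≥ 0 for every component index d. -/
/-- Every component of a vector closure certificate is nonnegative on
reachable pairs. -/
theorem vcc_nonneg_on_reachable_pairs {X : Type*} (f : X → Set X)
    (k : ℕ) (T : Fin k → X → X → ℝ)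
    (A : Fin k → Fin k → ℝ) (hA : ∀ i j, 0 ≤ A i j)
    (h1 : ∀ d, ∀ x, ∀ x' ∈ f x, T d x x' ≥ 0)
    (h2 : ∀ d, ∀ x y, ∀ x' ∈ f x, T d x y ≥ ∑ j, A d j * T j x' y) :
    ∀ s : ℕ → X, (∀ i, s (i + 1) ∈ f (s i)) →
      ∀ i j, i < j → ∀ d, T d (s i) (s j) ≥ 0 := by
  intro s hs
  have key : ∀ n i d, T d (s i) (s (i + n + 1)) ≥ 0 := by
    intro n
    induction n with
    | zero => intro i d; exact h1 d (s i) _ (hs i)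
    | succ m ih =>
      intro i d
      have h := h2 d (s i) (s (i + (m + 1) + 1)) (s (i + 1)) (hs i)
      refine le_trans ?_ h
      apply Finset.sum_nonneg
      intro j _
      have : s (i + (m + 1) + 1) = s ((i + 1) + m + 1) := by ring_nf
      rw [this]
      exact mul_nonneg (hA d j) (ih (i + 1) j)
  intro i j hij d
  obtain ⟨n, rfl⟩ := Nat.exists_eq_add_of_lt hij
  exact key n i d
end

section
/- If a closure certificate for persistence exists for a discrete-time dynamical system, then every state sequence of the system visits the set X_VF only finitely often. -/
/-- Closure certificates imply persistence: the set X_VF is visited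
only finitely often. -/
theorem cc_implies_persistence {X : Type*} (X0 XVF : Set X) (f : X → Set X)
    (T : X → X → ℝ) (η lam : ℝ) (hη : 0 < η) (hlam : 0 ≤ lam)
    (h1 : ∀ x, ∀ x' ∈ f x, T x x' ≥ 0)
    (h2 : ∀ x y, ∀ x' ∈ f x, T x y ≥ lam * T x' y)
    (h3 : ∀ x0 ∈ X0, ∀ y' ∈ XVF, ∀ y'' ∈ XVF,
      T x0 y' ≥ 0 → T y' y'' ≥ 0 → T x0 y'' ≤ T x0 y' - η) :
    ∀ s : ℕ → X, s 0 ∈ X0 → (∀ i, s (i + 1) ∈ f (s i)) →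
      ∃ N, ∀ i, N ≤ i → s i ∉ XVF := by
  intro s hs0 hstep
  -- key: T (s i) (s j) ≥ 0 whenever i < j
  have key : ∀ d i : ℕ, T (s i) (s (i + d + 1)) ≥ 0 := by
    intro d
    induction d with
    | zero => intro i; exact h1 _ _ (hstep i)
    | succ d ih =>
      intro i
      have h := h2 (s i) (s (i + (d + 1) + 1)) (s (i + 1)) (hstep i)
      have h' : T (s (i + 1)) (s (i + 1 + d + 1)) ≥ 0 := ih (i + 1)
      have heq : i + 1 + d + 1 = i + (d + 1) + 1 := by ring
      rw [heq] at h'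
      have : lam * T (s (i + 1)) (s (i + (d + 1) + 1)) ≥ 0 := mul_nonneg hlam h'
      linarith
  have key' : ∀ i j : ℕ, i < j → T (s i) (s j) ≥ 0 := by
    intro i j hij
    obtain ⟨d, rfl⟩ : ∃ d, j = i + d + 1 := ⟨j - i - 1, by omega⟩
    exact key d i
  by_contra hcon
  push_neg at hcon
  have H : ∀ N : ℕ, ∃ i, N ≤ i ∧ s i ∈ XVF := by
    intro N
    obtain ⟨i, hi, hmem⟩ := hcon N
    exact ⟨i, hi, hmem⟩
  -- visit times
  let n : ℕ → ℕ := fun k => Nat.rec (H 1).choose (fun _ prev => (H (prev + 1)).choose) k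
  have hn0 : 1 ≤ n 0 := (H 1).choose_spec.1
  have hnmem : ∀ k, s (n k) ∈ XVF := by
    intro k
    cases k with
    | zero => exact (H 1).choose_spec.2
    | succ k => exact (H (n k + 1)).choose_spec.2
  have hnmono : ∀ k, n k < n (k + 1) := by
    intro k
    have h := (H (n k + 1)).choose_spec.1
    have he : n (k + 1) = (H (n k + 1)).choose := rfl
    omega
  have hnpos : ∀ k, 1 ≤ n k := by
    intro k
    induction k with
    | zero => exact hn0
    | succ k ih => have := hnmono k; omega
  -- T (s 0) (s (n k)) ≤ T (s 0) (s (n 0)) - k * η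
  have dec : ∀ k : ℕ, T (s 0) (s (n k)) ≤ T (s 0) (s (n 0)) - k * η := by
    intro k
    induction k with
    | zero => simp
    | succ k ih =>
      have h0 : T (s 0) (s (n k)) ≥ 0 := key' 0 (n k) (hnpos k)
      have hk : T (s (n k)) (s (n (k + 1))) ≥ 0 := key' _ _ (hnmono k)
      have := h3 (s 0) hs0 (s (n k)) (hnmem k) (s (n (k + 1))) (hnmem (k + 1)) h0 hk
      push_cast
      push_cast at ih
      linarith
  obtain ⟨k, hk⟩ := exists_nat_gt (T (s 0) (s (n 0)) / η)
  have h0 : T (s 0) (s (n k)) ≥ 0 := key' 0 (n k) (hnpos k)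
  have := dec k
  have : (k : ℝ) * η > T (s 0) (s (n 0)) := by
    rw [div_lt_iff₀ hη] at hk; linarith
  linarith
end

section
/- If a vector closure certificate for persistence exists for a discrete-time dynamical system, then every state sequence visits the set X_VF only finitely often. -/
open Classical in
lemma vcc_pigeonhole_mono {k : ℕ} [Nonempty (Fin k)] (h : ℕ → Fin k) :
    ∃ j : Fin k, ∃ g : ℕ → ℕ, StrictMono g ∧ ∀ n, h (g n) = j := by
  obtain ⟨j, hj⟩ := Finite.exists_infinite_fiber h
  have hinf : (setOf (fun n => h n = j)).Infinite := Set.infinite_coe_iff.mp hj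
  exact ⟨j, Nat.nth (fun n => h n = j), Nat.nth_strictMono hinf,
    fun n => Nat.nth_mem_of_infinite hinf n⟩

open Classical in
lemma vcc_ramsey_chain {k : ℕ} [Nonempty (Fin k)] (C : ℕ → ℕ → Fin k) :
    ∃ j : Fin k, ∃ b : ℕ → ℕ, StrictMono b ∧ ∀ n, C (b n) (b (n + 1)) = j := by
  have key : ∀ e : ℕ → ℕ, StrictMono e →
      ∃ j : Fin k, ∃ e' : ℕ → ℕ, StrictMono e' ∧ (∀ n, ∃ m, e' n = e (m + 1)) ∧
        ∀ n, C (e 0) (e' n) = j := by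
    intro e he
    obtain ⟨j, g, hg, hcol⟩ := vcc_pigeonhole_mono (fun n => C (e 0) (e (n + 1)))
    exact ⟨j, fun n => e (g n + 1), he.comp (fun a b hab => by
      have := hg hab; omega), fun n => ⟨g n, rfl⟩, hcol⟩
  choose J E hE1 hE2 hE3 using key
  -- build the sequence of nested subsequences
  let σ : ℕ → {e : ℕ → ℕ // StrictMono e} := fun n =>
    Nat.rec ⟨id, strictMono_id⟩ (fun _ p => ⟨E p.1 p.2, hE1 p.1 p.2⟩) n
  have hσ : ∀ i, σ (i + 1) = ⟨E (σ i).1 (σ i).2, hE1 (σ i).1 (σ i).2⟩ := fun i => rfl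
  set a : ℕ → ℕ := fun i => (σ i).1 0 with ha
  set js : ℕ → Fin k := fun i => J (σ i).1 (σ i).2 with hjs
  have F1 : ∀ i n, C (a i) ((σ (i + 1)).1 n) = js i := fun i n => hE3 (σ i).1 (σ i).2 n
  have F2 : ∀ i n, ∃ m, (σ (i + 1)).1 n = (σ i).1 (m + 1) := fun i n => hE2 (σ i).1 (σ i).2 n
  have F3 : ∀ i i', i < i' → ∀ n, ∃ m, (σ i').1 n = (σ (i + 1)).1 m := by
    intro i i' hlt
    induction i' with
    | zero => omega
    | succ i'' ih =>
      intro n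
      rcases Nat.lt_or_ge i i'' with h' | h'
      · obtain ⟨m, hm⟩ := F2 i'' n
        obtain ⟨m', hm'⟩ := ih h' (m + 1)
        exact ⟨m', by rw [hm, hm']⟩
      · have : i = i'' := by omega
        subst this
        exact ⟨n, rfl⟩
  have hastep : ∀ i, a i < a (i + 1) := by
    intro i
    obtain ⟨m, hm⟩ := F2 i 0
    have : (σ i).1 0 < (σ i).1 (m + 1) := (σ i).2 (by omega)
    simpa [ha, hm] using this
  have hamono : StrictMono a := strictMono_nat_of_lt_succ hastep
  have F4 : ∀ i i', i < i' → C (a i) (a i') = js i := by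
    intro i i' hlt
    obtain ⟨m, hm⟩ := F3 i i' hlt 0
    have : a i' = (σ (i + 1)).1 m := hm
    rw [this, F1]
  obtain ⟨j, φ, hφ, hjφ⟩ := vcc_pigeonhole_mono js
  exact ⟨j, a ∘ φ, hamono.comp hφ, fun n => by
    have := F4 (φ n) (φ (n + 1)) (hφ (by omega))
    simpa [hjφ n] using this⟩

/-- Vector closure certificates imply persistence. -/
theorem vcc_implies_persistence {X : Type*} (X0 XVF : Set X) (f : X → Set X)
    (k : ℕ) (T : Fin k → X → X → ℝ) (η : ℝ) (hη : 0 < η)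
    (A : Fin k → Fin k → ℝ) (hA : ∀ i j, 0 ≤ A i j)
    (h1 : ∀ i, ∀ x, ∀ x' ∈ f x, T i x x' ≥ 0)
    (h2 : ∀ i, ∀ x y, ∀ x' ∈ f x, T i x y ≥ ∑ j, A i j * T j x' y)
    (h3 : ∀ x0 ∈ X0, ∀ y' ∈ XVF, ∀ y'' ∈ XVF,
      (∀ i, T i x0 y' ≥ 0) → (∀ i, T i y' y'' ≥ 0) →
      ∃ j, T j x0 y'' ≤ T j x0 y' - η) :
    ∀ s : ℕ → X, s 0 ∈ X0 → (∀ i, s (i + 1) ∈ f (s i)) →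
      ∃ N, ∀ i, N ≤ i → s i ∉ XVF := by
  classical
  intro s hs0 hstep
  by_contra hcon
  push_neg at hcon
  -- extract visit times
  choose F hF1 hF2 using hcon
  set t : ℕ → ℕ := fun n => Nat.rec (F 1) (fun _ p => F (p + 1)) n with ht
  have ht0 : (1 : ℕ) ≤ t 0 := hF1 1
  have htsucc : ∀ n, t n < t (n + 1) := fun n => by
    have h := hF1 (t n + 1)
    have h' : t (n + 1) = F (t n + 1) := rfl
    omega
  have htmono : StrictMono t := strictMono_nat_of_lt_succ htsucc
  have htpos : ∀ n, 0 < t n := by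
    intro n
    rcases n with _ | m
    · omega
    · have := htmono (show 0 < m + 1 by omega); omega
  have htVF : ∀ n, s (t n) ∈ XVF := by
    intro n
    rcases n with _ | m
    · exact hF2 1
    · exact hF2 (t m + 1)
  -- nonnegativity along trajectories
  have L1 : ∀ d m i, 0 ≤ T i (s m) (s (m + d + 1)) := by
    intro d
    induction d with
    | zero => intro m i; exact h1 i (s m) (s (m + 1)) (hstep m)
    | succ d ih =>
      intro m i
      have h2' := h2 i (s m) (s (m + (d + 1) + 1)) (s (m + 1)) (hstep m)
      have hsum : 0 ≤ ∑ j, A i j * T j (s (m + 1)) (s (m + (d + 1) + 1)) := by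
        apply Finset.sum_nonneg
        intro j _
        have harr : (m + 1) + d + 1 = m + (d + 1) + 1 := by ring
        have hj := ih (m + 1) j
        rw [harr] at hj
        exact mul_nonneg (hA i j) hj
      linarith
  have L1' : ∀ m n, m < n → ∀ i, 0 ≤ T i (s m) (s n) := by
    intro m n hmn i
    have : n = m + (n - m - 1) + 1 := by omega
    rw [this]
    exact L1 (n - m - 1) m i
  -- the coloring
  have hcol : ∀ ℓ m, ℓ < m →
      ∃ j, T j (s 0) (s (t m)) ≤ T j (s 0) (s (t ℓ)) - η := by
    intro ℓ m hlm
    exact h3 (s 0) hs0 (s (t ℓ)) (htVF ℓ) (s (t m)) (htVF m)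
      (fun i => L1' 0 (t ℓ) (htpos ℓ) i)
      (fun i => L1' (t ℓ) (t m) (htmono hlm) i)
  haveI : Nonempty (Fin k) := ⟨(hcol 0 1 Nat.zero_lt_one).choose⟩
  set C : ℕ → ℕ → Fin k := fun ℓ m =>
    if h : ℓ < m then (hcol ℓ m h).choose else Classical.arbitrary (Fin k) with hC
  have hCspec : ∀ ℓ m (h : ℓ < m),
      T (C ℓ m) (s 0) (s (t m)) ≤ T (C ℓ m) (s 0) (s (t ℓ)) - η := by
    intro ℓ m h
    simp only [hC, dif_pos h]
    exact (hcol ℓ m h).choose_spec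
  obtain ⟨j, b, hb, hbcol⟩ := vcc_ramsey_chain C
  set v : ℕ → ℝ := fun n => T j (s 0) (s (t (b n))) with hv
  have hdrop : ∀ n, v (n + 1) ≤ v n - η := by
    intro n
    have h := hCspec (b n) (b (n + 1)) (hb (by omega))
    rw [hbcol n] at h
    exact h
  have hlow : ∀ n, 0 ≤ v n := fun n => L1' 0 (t (b n)) (htpos (b n)) j
  have hdesc : ∀ n, v n ≤ v 0 - n * η := by
    intro n
    induction n with
    | zero => simp
    | succ n ih =>
      have := hdrop n
      push_cast
      push_cast at ih
      linarith
  obtain ⟨n, hn⟩ := exists_nat_gt (v 0 / η)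
  have : v 0 < n * η := by
    rwa [div_lt_iff₀ hη] at hn
  have := hdesc n
  have := hlow n
  linarith
end

section
/- If a Büchi ranking function exists for a discrete-time dynamical system, then along any state sequence, the value of the function at every state is nonnegative and, as long as states remain outside X_INF, the function strictly decreases by at least η; consequently, every state sequence visits the set X_INF infinitely often. -/
/-- Büchi ranking functions imply recurrence: along any state sequence the
function is nonnegative, it strictly decreases by at least `η` while
outside `X_INF`, and consequently `X_INF` is visited infinitely often. -/
theorem brf_implies_recurrence {X : Type*} (X0 XINF : Set X) (f : X → Set X)
    (B : X → ℝ) (η lam1 : ℝ) (hη : 0 < η) (hlam1 : 0 ≤ lam1)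
    (h1 : ∀ x0 ∈ X0, B x0 ≥ 0)
    (h2 : ∀ x, ∀ x' ∈ f x, B x' ≥ lam1 * B x)
    (h3 : ∀ y ∈ (Set.univ : Set X) \ XINF, ∀ y' ∈ f y,
      B y ≥ 0 → B y - B y' - η ≥ 0) :
    ∀ s : ℕ → X, s 0 ∈ X0 → (∀ i, s (i + 1) ∈ f (s i)) →
      (∀ n, B (s n) ≥ 0) ∧
      (∀ n, s n ∉ XINF → B (s n) - B (s (n + 1)) ≥ η) ∧
      (∀ N, ∃ i, N ≤ i ∧ s i ∈ XINF) := by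
  intro s hs0 hstep
  have hnn : ∀ n, B (s n) ≥ 0 := by
    intro n
    induction n with
    | zero => exact h1 _ hs0
    | succ k ih =>
      have := h2 (s k) (s (k + 1)) (hstep k)
      nlinarith
  have hdec : ∀ n, s n ∉ XINF → B (s n) - B (s (n + 1)) ≥ η := by
    intro n hn
    have := h3 (s n) ⟨Set.mem_univ _, hn⟩ (s (n + 1)) (hstep n) (hnn n)
    linarith
  refine ⟨hnn, hdec, ?_⟩
  intro N
  by_contra h
  push_neg at h
  have hout : ∀ k, s (N + k) ∉ XINF := fun k => h (N + k) (Nat.le_add_right N k)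
  have key : ∀ k, B (s (N + k)) ≤ B (s N) - k * η := by
    intro k
    induction k with
    | zero => simp
    | succ m ih =>
      have := hdec (N + m) (hout m)
      have : B (s (N + m + 1)) ≤ B (s (N + m)) - η := by linarith
      push_cast
      calc B (s (N + (m + 1))) = B (s (N + m + 1)) := by ring_nf
        _ ≤ B (s (N + m)) - η := this
        _ ≤ B (s N) - m * η - η := by linarith
        _ = B (s N) - (m + 1) * η := by ring
  obtain ⟨k, hk⟩ := exists_nat_gt (B (s N) / η)
  have := key k
  have hnk := hnn (N + k)
  have : (k : ℝ) * η > B (s N) := by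
    rw [div_lt_iff₀ hη] at hk
    linarith
  linarith
end

section
/- If B : X → ℝ satisfies: B x₀ ≥ 0 on X₀; B x' ≥ λ₁ B x with λ₁ ≥ 0 on transitions; B is nonincreasing on transitions from nonnegative states outside X_VF; and B strictly decreases by η > 0 on transitions from nonnegative states inside X_VF; then every state sequence visits X_VF only finitely often. -/
/-- A scalar co-Büchi ranking function implies that `X_VF` is visited
only finitely often. -/
theorem cbrf_implies_persistence {X : Type*} (X0 XVF : Set X) (f : X → Set X)
    (B : X → ℝ) (η lam1 : ℝ) (hη : 0 < η) (hlam1 : 0 ≤ lam1)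
    (h1 : ∀ x0 ∈ X0, B x0 ≥ 0)
    (h2 : ∀ x, ∀ x' ∈ f x, B x' ≥ lam1 * B x)
    (h3 : ∀ y ∉ XVF, ∀ y' ∈ f y, B y ≥ 0 → B y ≥ B y')
    (h4 : ∀ z ∈ XVF, ∀ z' ∈ f z, B z ≥ 0 → B z - B z' ≥ η) :
    ∀ s : ℕ → X, s 0 ∈ X0 → (∀ i, s (i + 1) ∈ f (s i)) →
      ∃ N, ∀ i, N ≤ i → s i ∉ XVF := by
  intro s hs0 hstep
  -- B is nonnegative along the trajectory
  have hnonneg : ∀ i, 0 ≤ B (s i) := by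
    intro i
    induction i with
    | zero => exact h1 _ hs0
    | succ n ih =>
      have := h2 (s n) (s (n+1)) (hstep n)
      nlinarith
  -- B is nonincreasing along the trajectory
  have hdec : ∀ i, B (s (i+1)) ≤ B (s i) := by
    intro i
    by_cases h : s i ∈ XVF
    · have := h4 (s i) h (s (i+1)) (hstep i) (hnonneg i)
      linarith
    · exact h3 (s i) h (s (i+1)) (hstep i) (hnonneg i)
  have hmono : ∀ m n, m ≤ n → B (s n) ≤ B (s m) := by
    intro m n hmn
    induction n with
    | zero => simp_all
    | succ k ih =>
      rcases Nat.lt_or_ge m (k+1) with h | h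
      · exact le_trans (hdec k) (ih (Nat.lt_succ_iff.mp h))
      · have : m = k + 1 := le_antisymm hmn h
        simp [this]
  by_contra hcon
  push_neg at hcon
  -- from hcon, for every k we find n with B (s n) ≤ B (s 0) - k * η
  have key : ∀ k : ℕ, ∃ n, B (s n) ≤ B (s 0) - k * η := by
    intro k
    induction k with
    | zero => exact ⟨0, by simp⟩
    | succ k ih =>
      obtain ⟨n, hn⟩ := ih
      obtain ⟨i, hni, hi⟩ := hcon n
      have h1' := h4 (s i) hi (s (i+1)) (hstep i) (hnonneg i)
      have h2' := hmono n i hni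
      refine ⟨i + 1, ?_⟩
      push_cast
      linarith
  obtain ⟨k, hk⟩ := exists_nat_gt (B (s 0) / η)
  obtain ⟨n, hn⟩ := key k
  have : B (s 0) < k * η := by
    rw [div_lt_iff₀ hη] at hk; linarith
  have := hnonneg n
  linarith
end

section
/- Under the hypotheses of a vector co-Büchi ranking function, for any state sequence s, the number of indices i with s i ∈ X_VF is at most ⌈B i₀ (s 0) / η⌉ for any component i₀; in particular it is finite. -/
/-- Under the hypotheses of a vector co-Büchi ranking function, the number of
times a state sequence visits `X_VF` is finite and bounded by
`⌈B i₀ (s 0) / η⌉` for any component `i₀`. -/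
theorem vcbrf_visit_count_bound {X : Type*} (X0 XVF : Set X) (f : X → Set X)
    (k : ℕ) (hk : 1 ≤ k) (B : Fin k → X → ℝ) (η : ℝ) (hη : 0 < η)
    (A1 : Fin k → Fin k → ℝ) (hA1 : ∀ i j, 0 ≤ A1 i j)
    (h1 : ∀ i, ∀ x0 ∈ X0, B i x0 ≥ 0)
    (h2 : ∀ i, ∀ x, ∀ x' ∈ f x, B i x' ≥ ∑ j, A1 i j * B j x)
    (h3 : ∀ y ∉ XVF, ∀ y' ∈ f y, (∀ i, B i y ≥ 0) → ∀ i, B i y ≥ B i y')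
    (h4 : ∀ z ∈ XVF, ∀ z' ∈ f z, (∀ i, B i z ≥ 0) → ∀ i, B i z - B i z' ≥ η) :
    ∀ s : ℕ → X, s 0 ∈ X0 → (∀ i, s (i + 1) ∈ f (s i)) →
      {i : ℕ | s i ∈ XVF}.Finite ∧
      ∀ i0 : Fin k, ({i : ℕ | s i ∈ XVF}.ncard : ℤ) ≤ ⌈B i0 (s 0) / η⌉ := by
  classical
  intro s hs0 hstep
  -- nonnegativity along the sequence
  have nonneg : ∀ n i, 0 ≤ B i (s n) := by
    intro n
    induction n with
    | zero => exact fun i => h1 i _ hs0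
    | succ n ih =>
      intro i
      have := h2 i (s n) (s (n + 1)) (hstep n)
      refine le_trans ?_ this
      exact Finset.sum_nonneg fun j _ => mul_nonneg (hA1 i j) (ih j)
  set c : ℕ → ℕ := fun N => ((Finset.range N).filter (fun n => s n ∈ XVF)).card with hc
  have key : ∀ (i0 : Fin k) (N : ℕ), B i0 (s N) + η * c N ≤ B i0 (s 0) := by
    intro i0 N
    induction N with
    | zero => simp [hc]
    | succ N ih =>
      have hcs : c (N + 1) = if s N ∈ XVF then c N + 1 else c N := by
        simp [hc, Finset.range_add_one, Finset.filter_insert]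
        split <;> simp [Finset.card_insert_of_notMem, Finset.mem_filter]
      by_cases hN : s N ∈ XVF
      · have h := h4 (s N) hN (s (N + 1)) (hstep N) (fun i => nonneg N i) i0
        rw [hcs, if_pos hN]
        push_cast
        nlinarith
      · have h := h3 (s N) hN (s (N + 1)) (hstep N) (fun i => nonneg N i) i0
        rw [hcs, if_neg hN]
        linarith
  have cbound : ∀ (i0 : Fin k) (N : ℕ), (c N : ℤ) ≤ ⌈B i0 (s 0) / η⌉ := by
    intro i0 N
    have h := key i0 N
    have h2' : (c N : ℝ) ≤ B i0 (s 0) / η := by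
      rw [le_div_iff₀ hη]
      nlinarith [nonneg N i0]
    calc (c N : ℤ) = ⌈((c N : ℕ) : ℝ)⌉ := by simp
      _ ≤ ⌈B i0 (s 0) / η⌉ := Int.ceil_le_ceil h2'
  have i0' : Fin k := ⟨0, hk⟩
  set C : ℕ := (⌈B i0' (s 0) / η⌉).toNat with hC
  -- any finite subset of the visit set has card ≤ C
  have sub_bound : ∀ t : Finset ℕ, (↑t ⊆ {i : ℕ | s i ∈ XVF}) → t.card ≤ C := by
    intro t ht
    obtain ⟨N, hN⟩ : ∃ N, ∀ n ∈ t, n < N := ⟨(t.sup id) + 1, fun n hn =>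
      Nat.lt_succ_of_le (Finset.le_sup (f := id) hn)⟩
    have hsub : t ⊆ (Finset.range N).filter (fun n => s n ∈ XVF) := by
      intro n hn
      simp only [Finset.mem_filter, Finset.mem_range]
      exact ⟨hN n hn, ht hn⟩
    have h1' : t.card ≤ c N := Finset.card_le_card hsub
    have h2' : (c N : ℤ) ≤ (C : ℤ) := by
      rw [hC, Int.toNat_of_nonneg]
      · exact cbound i0' N
      · exact le_trans (by exact_mod_cast Nat.zero_le (c N)) (cbound i0' N)
    have : (t.card : ℤ) ≤ (C : ℤ) := le_trans (by exact_mod_cast h1') h2'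
    exact_mod_cast this
  have hfin : {i : ℕ | s i ∈ XVF}.Finite := by
    by_contra h
    rw [← Set.not_infinite, not_not] at h
    obtain ⟨t, ht, hcard⟩ := h.exists_subset_card_eq (C + 1)
    have := sub_bound t ht
    omega
  refine ⟨hfin, fun i0 => ?_⟩
  obtain ⟨N, hN⟩ : ∃ N, ∀ n ∈ hfin.toFinset, n < N := ⟨(hfin.toFinset.sup id) + 1,
    fun n hn => Nat.lt_succ_of_le (Finset.le_sup (f := id) hn)⟩
  have hsub : hfin.toFinset ⊆ (Finset.range N).filter (fun n => s n ∈ XVF) := by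
    intro n hn
    simp only [Finset.mem_filter, Finset.mem_range]
    exact ⟨hN n hn, (hfin.mem_toFinset.mp hn)⟩
  have hle : {i : ℕ | s i ∈ XVF}.ncard ≤ c N := by
    rw [Set.ncard_eq_toFinset_card _ hfin]
    exact Finset.card_le_card hsub
  exact le_trans (by exact_mod_cast hle) (cbound i0 N)
end

section
/- Given a closure certificate for persistence and a state sequence s, if s visits X_VF at an infinite increasing sequence of times n₀ < n₁ < n₂ < …, then T (s 0) (s n_ℓ) ≤ T (s 0) (s n₀) - ℓ·η for all ℓ ≥ 1, which contradicts nonnegativity of T on reachable pairs for large ℓ. -/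
/-- Given a closure certificate for persistence and a state sequence
visiting `X_VF` at an infinite increasing sequence of times, the
certificate decreases by `ℓ·η` along the visits, contradicting its
nonnegativity on reachable pairs. -/
theorem cc_persistence_contradiction {X : Type*} (X0 XVF : Set X)
    (f : X → Set X) (T : X → X → ℝ) (η lam : ℝ) (hη : 0 < η) (hlam : 0 ≤ lam)
    (h1 : ∀ x, ∀ x' ∈ f x, T x x' ≥ 0)
    (h2 : ∀ x y, ∀ x' ∈ f x, T x y ≥ lam * T x' y)
    (h3 : ∀ x0 ∈ X0, ∀ y' ∈ XVF, ∀ y'' ∈ XVF,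
      T x0 y' ≥ 0 → T y' y'' ≥ 0 → T x0 y'' ≤ T x0 y' - η)
    (s : ℕ → X) (hs0 : s 0 ∈ X0) (hs : ∀ i, s (i + 1) ∈ f (s i))
    (n : ℕ → ℕ) (hn : StrictMono n) (hn0 : 1 ≤ n 0)
    (hvis : ∀ l, s (n l) ∈ XVF) :
    (∀ l : ℕ, 1 ≤ l → T (s 0) (s (n l)) ≤ T (s 0) (s (n 0)) - l * η) ∧
    False := by
  -- nonnegativity on reachable pairs
  have key : ∀ d i : ℕ, 0 ≤ T (s i) (s (i + d + 1)) := by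
    intro d
    induction d with
    | zero => intro i; exact h1 _ _ (hs i)
    | succ d ih =>
      intro i
      have h := h2 (s i) (s (i + (d + 1) + 1)) (s (i + 1)) (hs i)
      have : i + (d + 1) + 1 = (i + 1) + d + 1 := by omega
      rw [this] at h ⊢
      have := ih (i + 1)
      nlinarith
  have nonneg : ∀ i j : ℕ, i < j → 0 ≤ T (s i) (s j) := by
    intro i j hij
    have : j = i + (j - i - 1) + 1 := by omega
    rw [this]; exact key _ _
  have main : ∀ l : ℕ, 1 ≤ l → T (s 0) (s (n l)) ≤ T (s 0) (s (n 0)) - l * η := by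
    intro l hl
    induction l with
    | zero => omega
    | succ l ih =>
      have hT0 : T (s 0) (s (n l)) ≥ 0 := nonneg 0 (n l) (by have := hn0; have := hn.monotone (Nat.zero_le l); omega)
      have hT1 : T (s (n l)) (s (n (l + 1))) ≥ 0 := nonneg _ _ (hn (Nat.lt_succ_self l))
      have step := h3 (s 0) hs0 (s (n l)) (hvis l) (s (n (l + 1))) (hvis (l + 1)) hT0 hT1
      rcases Nat.eq_zero_or_pos l with h0 | h0
      · subst h0; simpa using step
      · have := ih h0
        push_cast
        nlinarith
  refine ⟨main, ?_⟩
  obtain ⟨l, hl⟩ := exists_nat_gt ((T (s 0) (s (n 0)) + 1) / η)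
  have hl1 : 1 ≤ l + 1 := by omega
  have h := main (l + 1) hl1
  have hge : 0 ≤ T (s 0) (s (n (l + 1))) :=
    nonneg 0 (n (l + 1)) (by have := hn0; have := hn.monotone (Nat.zero_le (l+1)); omega)
  have : ((l : ℝ) + 1) * η > T (s 0) (s (n 0)) := by
    rw [div_lt_iff₀ hη] at hl
    nlinarith
  push_cast at h
  linarith
end
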